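/- arXiv:2408.07742 — 2 statements merged into one kernel-verified Lean document; each statement's English description precedes it below -/
import Mathlib

section
/- For a Hermitian matrix H with eigenvalues in [E₀, E_{N-1}] and a real number a ∉ [E₀, E_{N-1}], the resolvent satisfies (a - H)^{-1} = (1/π)·sgn(a - E₀) ∫₀^∞ ∫_{-∞}^∞ e^{-y²/2} e^{iy(a - H)q} dy dq. -/
open MeasureTheory Complex

noncomputable section

abbrev Op (N : ℕ) := EuclideanSpace ℂ (Fin N) →L[ℂ] EuclideanSpace ℂ (Fin N)

open Set

/-!
For a normal element `x` the continuous functional calculus commutes with both integrals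
(dominated by `e^{-y²/2}`, resp. by `e^{-d²q²/2}` where `d` is the distance from `a` to the
spectrum), so the identity reduces to a scalar one at each real point `t` of the spectrum.
With `b = a - t`, the Fourier transform of the Gaussian gives
`∫ e^{-y²/2} e^{iyqb} dy = √(2π) e^{-q²b²/2}`, and the half-line Gaussian integral then gives
`π / |b|`; since `a` lies on one side of `[lo, hi]`, `sign (a - lo) / |b| = b⁻¹`.
-/

lemma integral_gaussian_smul_cexp_I_mul (w : ℂ) :
    ∫ y : ℝ, Real.exp (-y ^ 2 / 2) • cexp (I * y * w) = √(2 * Real.pi) * cexp (-w ^ 2 / 2) := by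
  have h := fourierIntegral_gaussian (b := 1 / 2) (by norm_num) w
  have hsqrt : ((Real.pi : ℂ) / (1 / 2)) ^ (1 / 2 : ℂ) = √(2 * Real.pi) := by
    rw [Real.sqrt_eq_rpow, ofReal_cpow (by positivity)]
    push_cast
    ring_nf
  rw [hsqrt] at h
  convert h using 2
  · ext y
    rw [real_smul, ofReal_exp, ← Complex.exp_add, ← Complex.exp_add]
    push_cast
    ring_nf
  · ring_nf

lemma integrable_exp_neg_sq_div_two : Integrable fun y : ℝ => Real.exp (-y ^ 2 / 2) := by
  simpa [neg_div, div_eq_inv_mul] using integrable_exp_neg_mul_sq (b := 1 / 2) (by norm_num)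

lemma integral_Ioi_gaussian_cexp_mul (b : ℝ) :
    ∫ q in Ioi (0 : ℝ), (√(2 * Real.pi) : ℂ) * cexp (-((q : ℂ) * b) ^ 2 / 2) =
      ((Real.pi / |b| : ℝ) : ℂ) := by
  have hintegrand : (fun q : ℝ => (√(2 * Real.pi) : ℂ) * cexp (-((q : ℂ) * b) ^ 2 / 2)) =
      fun q : ℝ => ((√(2 * Real.pi) * Real.exp (-(b ^ 2 / 2) * q ^ 2) : ℝ) : ℂ) := by
    ext q
    push_cast
    ring_nf
  rw [hintegrand, integral_complex_ofReal, integral_const_mul, integral_gaussian_Ioi]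
  congr 1
  rw [div_div_eq_mul_div, mul_comm Real.pi, Real.sqrt_div' _ (sq_nonneg b), Real.sqrt_sq_eq_abs]
  ring_nf
  rw [Real.sq_sqrt (by positivity)]
  ring

lemma sign_sub_div_abs_sub_eq_inv {lo hi a t : ℝ} (ht : t ∈ Icc lo hi) (ha : a ∉ Icc lo hi) :
    Real.sign (a - lo) / |a - t| = (a - t)⁻¹ := by
  rcases not_and_or.mp ha with hlo | hhi
  · rw [Real.sign_of_neg (by linarith), abs_of_neg (by linarith [ht.1]), div_neg,
      neg_div, neg_neg, one_div]
  · rw [Real.sign_of_pos (by linarith [ht.1, ht.2]), abs_of_pos (by linarith [ht.2]), one_div]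

section
variable {A : Type*} [CStarAlgebra A] (x : A) [IsStarNormal x]

lemma cfc_const_sub_id (c : ℂ) : cfc (fun z => c - z) x = c • 1 - x := by
  rw [cfc_sub .., cfc_const .., cfc_id' .., Algebra.algebraMap_eq_smul_one]

lemma exp_smul_smul_one_sub_eq_cfc (c w : ℂ) :
    NormedSpace.exp (w • (c • 1 - x)) = cfc (fun z => cexp (w * (c - z))) x := by
  rw [← cfc_const_sub_id, ← cfc_const_mul .., ← CFC.complex_exp_eq_normedSpace_exp,
    ← cfc_comp' ..]

lemma integral_gaussian_smul_exp_eq_cfc (hx : spectrum ℂ x ⊆ range ofReal) (a q : ℝ) :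
    ∫ y : ℝ, Real.exp (-y ^ 2 / 2) • NormedSpace.exp ((I * y * q) • ((a : ℂ) • 1 - x)) =
      cfc (fun z => √(2 * Real.pi) * cexp (-(q * (a - z)) ^ 2 / 2)) x := by
  have hsmul (y : ℝ) : Real.exp (-y ^ 2 / 2) • cfc (fun z => cexp (I * y * q * (a - z))) x =
      cfc (fun z => Real.exp (-y ^ 2 / 2) • cexp (I * y * q * (a - z))) x :=
    (cfc_smul ..).symm
  simp_rw [exp_smul_smul_one_sub_eq_cfc, hsmul]
  rw [← cfc_integral _ (fun y => Real.exp (-y ^ 2 / 2)) x (by fun_prop) ?bound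
    integrable_exp_neg_sq_div_two.hasFiniteIntegral]
  · congr with z
    simpa only [mul_assoc] using integral_gaussian_smul_cexp_I_mul (q * (a - z))
  · refine .of_forall fun y z hz => ?_
    obtain ⟨t, rfl⟩ := hx hz
    have : I * y * q * (a - t) = ((y * q * (a - t) : ℝ) : ℂ) * I := by push_cast; ring
    rw [norm_smul, this, norm_exp_ofReal_mul_I, mul_one, Real.norm_of_nonneg (Real.exp_nonneg _)]

lemma setIntegral_Ioi_cfc_gaussian (hx : spectrum ℂ x ⊆ range ofReal) (a : ℝ)
    (ha : (a : ℂ) ∉ spectrum ℂ x) :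
    ∫ q in Ioi (0 : ℝ), cfc (fun z => √(2 * Real.pi) * cexp (-(q * (a - z)) ^ 2 / 2)) x =
      cfc (fun z => ((Real.pi / ‖(a : ℂ) - z‖ : ℝ) : ℂ)) x := by
  obtain ⟨d, hd, hball⟩ := Metric.isOpen_iff.mp (spectrum.isClosed x).isOpen_compl _ ha
  have hbound : Integrable fun q : ℝ => √(2 * Real.pi) * Real.exp (-(d ^ 2 / 2) * q ^ 2) :=
    (integrable_exp_neg_mul_sq (by positivity)).const_mul _
  rw [← cfc_setIntegral measurableSet_Ioi _ _ x (by fun_prop) ?bound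
    hbound.restrict.hasFiniteIntegral]
  · refine cfc_congr fun z hz => ?_
    obtain ⟨t, rfl⟩ := hx hz
    rw [← ofReal_sub, integral_Ioi_gaussian_cexp_mul, norm_real, Real.norm_eq_abs]
  · refine ae_of_all _ fun q z hz => ?_
    obtain ⟨t, rfl⟩ := hx hz
    have hdist : d ≤ |a - t| := by
      have h := not_lt.mp fun h => hball (Metric.mem_ball.mpr h) hz
      rwa [dist_eq_norm, ← ofReal_sub, norm_real, Real.norm_eq_abs, abs_sub_comm] at h
    have hreal : (√(2 * Real.pi) : ℂ) * cexp (-(q * (a - t)) ^ 2 / 2) =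
        ((√(2 * Real.pi) * Real.exp (-(q * (a - t)) ^ 2 / 2) : ℝ) : ℂ) := by
      push_cast
      ring
    rw [hreal, norm_real, Real.norm_of_nonneg (by positivity)]
    gcongr
    nlinarith [sq_abs (a - t), sq_nonneg q, mul_le_mul hdist hdist hd.le (abs_nonneg _)]

theorem ring_inverse_smul_one_sub_eq_gaussian_integral (lo hi a : ℝ)
    (hspec : spectrum ℂ x ⊆ ofReal '' Icc lo hi) (ha : a ∉ Icc lo hi) :
    Ring.inverse ((a : ℂ) • 1 - x) =
      ((Real.sign (a - lo) / Real.pi : ℝ)) •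
        ∫ q in Ioi (0 : ℝ), ∫ y : ℝ,
          Real.exp (-y ^ 2 / 2) • NormedSpace.exp ((I * y * q) • ((a : ℂ) • 1 - x)) := by
  have hreal : spectrum ℂ x ⊆ range ofReal := hspec.trans (image_subset_range _ _)
  have ha' : (a : ℂ) ∉ spectrum ℂ x := fun h => by
    obtain ⟨t, ht, hta⟩ := hspec h
    exact ha (ofReal_injective hta ▸ ht)
  have hne : ∀ z ∈ spectrum ℂ x, (a : ℂ) - z ≠ 0 := fun z hz =>
    sub_ne_zero.mpr fun h => ha' (h ▸ hz)
  have hcont : ContinuousOn (fun z : ℂ => ((Real.pi / ‖(a : ℂ) - z‖ : ℝ) : ℂ)) (spectrum ℂ x) :=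
    continuous_ofReal.comp_continuousOn <|
      continuousOn_const.div (by fun_prop) fun z hz => norm_ne_zero_iff.mpr (hne z hz)
  simp_rw [integral_gaussian_smul_exp_eq_cfc x hreal]
  rw [setIntegral_Ioi_cfc_gaussian x hreal a ha', ← cfc_smul _ _ x hcont, ← cfc_const_sub_id,
    ← cfc_inv (fun z => (a : ℂ) - z) x hne]
  refine cfc_congr fun z hz => ?_
  obtain ⟨t, ht, rfl⟩ := hspec hz
  rw [← ofReal_sub, norm_real, Real.norm_eq_abs, ← ofReal_inv,
    ← sign_sub_div_abs_sub_eq_inv ht ha, real_smul, ← ofReal_mul]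
  congr 1
  field_simp

end

theorem stmt1_general {N : ℕ} (A : Op N) (hA : IsSelfAdjoint A) (Elo Ehi a : ℝ)
    (hspec : spectrum ℂ A ⊆ Complex.ofReal '' Set.Icc Elo Ehi)
    (ha : a ∉ Set.Icc Elo Ehi) :
    Ring.inverse ((a : ℂ) • (1 : Op N) - A) =
      ((Real.sign (a - Elo) / Real.pi : ℝ)) •
        ∫ q in Set.Ioi (0 : ℝ), ∫ y : ℝ,
          Real.exp (-y ^ 2 / 2) •
            NormedSpace.exp ((I * y * q) • ((a : ℂ) • (1 : Op N) - A)) :=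
  have := hA.isStarNormal
  ring_inverse_smul_one_sub_eq_gaussian_integral A Elo Ehi a hspec ha

/-- Gaussian-kernel double-integral representation of the resolvent for a real
pole `a` outside the spectral interval `[Elo, Ehi]`. -/
theorem stmt1 {N : ℕ} (A : Op N) (hA : IsSelfAdjoint A) (Elo Ehi a : ℝ)
    (hle : Elo ≤ Ehi)
    (hspec : spectrum ℂ A ⊆ Complex.ofReal '' Set.Icc Elo Ehi)
    (ha : a ∉ Set.Icc Elo Ehi) :
    Ring.inverse ((a : ℂ) • (1 : Op N) - A) =
      ((Real.sign (a - Elo) / Real.pi : ℝ)) •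
        ∫ q in Set.Ioi (0 : ℝ), ∫ y : ℝ,
          Real.exp (-y ^ 2 / 2) •
            NormedSpace.exp ((I * y * q) • ((a : ℂ) • (1 : Op N) - A)) :=
  stmt1_general A hA Elo Ehi a hspec ha
end
end

section
/- Supremum bound on the Bernstein ellipse for the resolvent integrand: let f_n(t) = exp(i(z - E_n)·T(1+t)/2) with z = a + ib, b > 0, E_n ∈ ℝ, and T > 0. Then for every σ > 1, sup_{t ∈ E_σ} |f_n(t)| ≤ exp( [ |a - E_n|(σ - σ^{-1}) + b(σ - 2 + σ^{-1}) ]·T/4 ). -/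
/-!
With `w = z - Eₙ` one has `|f_n(t)| = exp(-(T/2)(Im w · (1 + Re t) + Re w · Im t))`. On `E_σ`,
`Re t = ((σ + σ⁻¹)/2) cos θ` and `Im t = ((σ - σ⁻¹)/2) sin θ`, so `1 + Re t ≥ 1 - (σ + σ⁻¹)/2` and
`|Im t| ≤ (σ - σ⁻¹)/2`; since `Im w = b > 0` and `T > 0` this bounds the exponent.
-/

open Complex

noncomputable section

def bernsteinEllipse (σ : ℝ) : Set ℂ :=
  {t | ∃ θ : ℝ, t = (σ / 2 : ℂ) * Complex.exp (I * θ) +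
    (1 / (2 * σ) : ℂ) * Complex.exp (-(I * θ))}

namespace bernsteinEllipse

variable {σ : ℝ} {t : ℂ}

theorem exists_re_im_eq (ht : t ∈ bernsteinEllipse σ) :
    ∃ θ : ℝ, t.re = (σ + σ⁻¹) / 2 * Real.cos θ ∧ t.im = (σ - σ⁻¹) / 2 * Real.sin θ := by
  obtain ⟨θ, rfl⟩ := ht
  refine ⟨θ, ?_, ?_⟩ <;> simp [Complex.exp_re, Complex.exp_im] <;> ring

theorem abs_re_le (hσ : 0 ≤ σ) (ht : t ∈ bernsteinEllipse σ) : |t.re| ≤ (σ + σ⁻¹) / 2 := by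
  obtain ⟨θ, hre, -⟩ := exists_re_im_eq ht
  rw [hre, abs_mul, abs_of_nonneg (by positivity : 0 ≤ (σ + σ⁻¹) / 2)]
  exact mul_le_of_le_one_right (by positivity) (Real.abs_cos_le_one θ)

theorem abs_im_le (hσ : 1 ≤ σ) (ht : t ∈ bernsteinEllipse σ) : |t.im| ≤ (σ - σ⁻¹) / 2 := by
  obtain ⟨θ, -, him⟩ := exists_re_im_eq ht
  have hinv : σ⁻¹ ≤ σ := (inv_le_one_of_one_le₀ hσ).trans hσ
  rw [him, abs_mul, abs_of_nonneg (by linarith : 0 ≤ (σ - σ⁻¹) / 2)]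
  exact mul_le_of_le_one_right (by linarith) (Real.abs_sin_le_one θ)

end bernsteinEllipse

theorem norm_exp_I_mul_ofReal_mul_one_add (w t : ℂ) (T : ℝ) :
    ‖Complex.exp (I * w * T * (1 + t) / 2)‖ =
      Real.exp (-(T / 2) * (w.im * (1 + t.re) + w.re * t.im)) := by
  rw [Complex.norm_exp]
  congr 1
  simp [Complex.mul_re, Complex.mul_im]
  ring

/-- Supremum bound on the Bernstein ellipse for the resolvent integrand
`f_n(t) = exp(i (z - Eₙ) T (1+t)/2)` with `z = a + ib`, `b > 0`. -/
theorem stmt6 (a b En T σ : ℝ) (hb : 0 < b) (hT : 0 < T) (hσ : 1 < σ) (t : ℂ)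
    (ht : ∃ θ : ℝ, t = (σ / 2 : ℂ) * Complex.exp (I * θ) +
      (1 / (2 * σ) : ℂ) * Complex.exp (-(I * θ))) :
    ‖Complex.exp (I * (((a : ℂ) + b * I) - (En : ℂ)) * T * (1 + t) / 2)‖ ≤
      Real.exp ((|a - En| * (σ - σ⁻¹) + b * (σ - 2 + σ⁻¹)) * T / 4) := by
  have hw_re : (((a : ℂ) + b * I) - En).re = a - En := by simp
  have hw_im : (((a : ℂ) + b * I) - En).im = b := by simp
  rw [norm_exp_I_mul_ofReal_mul_one_add, hw_re, hw_im, Real.exp_le_exp]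
  have hre : b * -((σ + σ⁻¹) / 2) ≤ b * t.re :=
    mul_le_mul_of_nonneg_left (abs_le.mp (bernsteinEllipse.abs_re_le (by linarith) ht)).1 hb.le
  have him : |(a - En) * t.im| ≤ |a - En| * ((σ - σ⁻¹) / 2) := by
    rw [abs_mul]
    exact mul_le_mul_of_nonneg_left (bernsteinEllipse.abs_im_le hσ.le ht) (abs_nonneg _)
  have key : -(|a - En| * (σ - σ⁻¹) + b * (σ - 2 + σ⁻¹)) / 2 ≤
      b * (1 + t.re) + (a - En) * t.im := by
    linarith [neg_abs_le ((a - En) * t.im)]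
  linarith [mul_le_mul_of_nonneg_left key hT.le]
end
end
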